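/- arXiv:1603.02473 — 2 statements merged into one kernel-verified Lean document; each statement's English description precedes it below -/
import Mathlib

section
/- Let q be an odd prime and p a prime with p ≡ 3 (mod 4) and p ≡ 1 (mod q). Then the middle product Π_{(q+1)/2} = ∏_{j=((q-1)/2)(p-1)/q+1}^{((q+1)/2)(p-1)/q} j is a quadratic non-residue modulo p. -/
/-!
Write `p - 1 = q n` and `q = 2s + 1`. The middle block is `(s n, s n + n]`, and since
`p = 2 s n + n + 1` the involution `j ↦ p - j` maps it onto itself. Pairing `j` with `p - j ≡ -j`
turns the product into `(-1)^(n/2) c²` with `c ≠ 0`, and `n/2` is odd because `p ≡ 3 (mod 4)`.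
As `-1` is a non-residue modulo `p`, so is the middle product.
-/

open Finset

lemma not_isSquare_neg_mul_sq {F : Type*} [Field F] (h : ¬ IsSquare (-1 : F)) {c : F}
    (hc : c ≠ 0) : ¬ IsSquare (-1 * c ^ 2) := by
  intro hsq
  apply h
  have hdiv := hsq.div (IsSquare.sq c)
  rwa [mul_div_assoc, div_self (pow_ne_zero 2 hc), mul_one] at hdiv

lemma prod_Ioc_natCast_ne_zero {p : ℕ} [Fact p.Prime] {a b : ℕ} (hb : b < p) :
    ∏ j ∈ Ioc a b, (j : ZMod p) ≠ 0 := by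
  rw [prod_ne_zero_iff]
  intro j hj
  rw [mem_Ioc] at hj
  rw [Ne, ZMod.natCast_eq_zero_iff]
  exact Nat.not_dvd_of_pos_of_lt (by omega) (by omega)

-- `j ↦ p - j` swaps the two halves of the block, and `p - j ≡ -j`.
lemma prod_Ioc_symmetric_block {p A u : ℕ} (hp : p = 2 * A + 2 * u + 1) :
    ∏ j ∈ Ioc A (A + 2 * u), (j : ZMod p) =
      (-1) ^ u * (∏ j ∈ Ioc A (A + u), (j : ZMod p)) ^ 2 := by
  have hupper : ∏ j ∈ Ioc (A + u) (A + 2 * u), (j : ZMod p) =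
      ∏ j ∈ Ioc A (A + u), -(j : ZMod p) := by
    refine prod_nbij' (fun j => p - j) (fun j => p - j) ?_ ?_ ?_ ?_ ?_ <;>
      intro j hj <;> rw [mem_Ioc] at hj
    any_goals (rw [mem_Ioc]; omega)
    any_goals omega
    rw [Nat.cast_sub (by omega), ZMod.natCast_self, zero_sub, neg_neg]
  rw [← prod_Ioc_consecutive _ (Nat.le_add_right A u) (by omega), hupper,
    ← prod_mul_distrib]
  have hterm : ∀ j ∈ Ioc A (A + u), (j : ZMod p) * -(j : ZMod p) = -1 * (j : ZMod p) ^ 2 :=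
    fun j _ => by ring
  rw [prod_congr rfl hterm, prod_mul_distrib, prod_const, Nat.card_Ioc, Nat.add_sub_cancel_left,
    prod_pow]

lemma middle_block_bounds {p q : ℕ} (hqodd : Odd q) (hp4 : p % 4 = 3) (hpq : p % q = 1) :
    ∃ A u, (q - 1) / 2 * (p - 1) / q = A ∧ (q + 1) / 2 * (p - 1) / q = A + 2 * u ∧
      p = 2 * A + 2 * u + 1 ∧ Odd u := by
  obtain ⟨s, rfl⟩ := hqodd
  have hp : p = (2 * s + 1) * (p / (2 * s + 1)) + 1 := by
    have := Nat.div_add_mod p (2 * s + 1)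
    omega
  generalize p / (2 * s + 1) = n at hp
  subst hp
  obtain ⟨u, rfl⟩ : Even n := by
    refine Nat.even_iff.mpr (Nat.mod_two_ne_one.mp fun hn => ?_)
    have : (2 * s + 1) * n % 2 = 1 := by simp [Nat.mul_mod, hn]
    omega
  refine ⟨s * (2 * u), u, ?_, ?_, by ring, ?_⟩
  · rw [Nat.add_sub_cancel, Nat.add_sub_cancel, Nat.mul_div_cancel_left s two_pos, mul_left_comm,
      Nat.mul_div_cancel_left _ (by omega), two_mul]
  · rw [Nat.add_sub_cancel, show (2 * s + 1 + 1) / 2 = s + 1 by omega, mul_left_comm,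
      Nat.mul_div_cancel_left _ (by omega)]
    ring
  · refine Nat.not_even_iff_odd.mp fun ⟨v, hv⟩ => ?_
    subst hv
    ring_nf at hp4
    omega

theorem stmt7_general (p q : ℕ) (hp : p.Prime) (hqodd : Odd q)
    (hp4 : p % 4 = 3) (hpq : p % q = 1) :
    ¬ IsSquare ((∏ j ∈
        Finset.Ioc (((q - 1) / 2) * (p - 1) / q) (((q + 1) / 2) * (p - 1) / q), j : ℕ)
      : ZMod p) := by
  have := Fact.mk hp
  obtain ⟨A, u, hlo, hhi, hpAu, hu⟩ := middle_block_bounds hqodd hp4 hpq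
  rw [hlo, hhi, Nat.cast_prod, prod_Ioc_symmetric_block hpAu, hu.neg_one_pow]
  exact not_isSquare_neg_mul_sq (by rw [ZMod.exists_sq_eq_neg_one_iff]; simpa)
    (prod_Ioc_natCast_ne_zero (p := p) (a := A) (b := A + u) (by omega))

theorem stmt7 (p q : ℕ) (hp : p.Prime) (hq : q.Prime) (hqodd : Odd q)
    (hp4 : p % 4 = 3) (hpq : p % q = 1) :
    ¬ IsSquare ((∏ j ∈
        Finset.Ioc (((q - 1) / 2) * (p - 1) / q) (((q + 1) / 2) * (p - 1) / q), j : ℕ)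
      : ZMod p) :=
  stmt7_general p q hp hqodd hp4 hpq
end

section
/- Let q > 3 be an odd prime and p a prime with p ≡ 3 (mod q). For 1 ≤ k ≤ (q-1)/2, the number of integers in {⌊(k-1)p/q⌋+1,...,⌊kp/q⌋} equals (p-3)/q except when k = (q + 2 + ((q/3) - 1)/2)/3, in which case it equals (p-3)/q + 1, where (q/3) is the Legendre symbol of q mod 3. -/
/-!
Write `p = q m + r` with `r = p % q`. Then `⌊k p / q⌋ = k m + ⌊k r / q⌋`, so the `k`-th block
has `m + ⌊k r / q⌋ - ⌊(k - 1) r / q⌋` elements. For `r = 3` and `3 k < 2 q` the floor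
`⌊3 k / q⌋` is `0` or `1` and jumps exactly once, at `k = ⌈q / 3⌉ = ⌊(q + 2) / 3⌋`; the Legendre
symbol `(q / 3)` only serves to write this ceiling as `(q + 2 + ((q / 3) - 1) / 2) / 3`.
-/

open Finset

theorem Nat.mul_div_eq_mul_div_add_mul_mod_div (k p q : ℕ) :
    k * p / q = k * (p / q) + k * (p % q) / q := by
  rcases q.eq_zero_or_pos with rfl | hq
  · simp
  · conv_lhs => rw [← Nat.div_add_mod p q]
    rw [show k * (q * (p / q) + p % q) = q * (k * (p / q)) + k * (p % q) by ring,
      Nat.mul_add_div hq]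

theorem card_Ioc_mul_div (p q k : ℕ) (hk : 1 ≤ k) :
    #(Ioc ((k - 1) * p / q) (k * p / q)) = p / q + (k * (p % q) / q - (k - 1) * (p % q) / q) := by
  obtain ⟨j, rfl⟩ := Nat.exists_eq_add_of_le' hk
  have hmono : j * (p % q) / q ≤ (j + 1) * (p % q) / q :=
    Nat.div_le_div_right (Nat.mul_le_mul_right _ j.le_succ)
  rw [Nat.card_Ioc, Nat.add_sub_cancel, Nat.mul_div_eq_mul_div_add_mul_mod_div,
    Nat.mul_div_eq_mul_div_add_mul_mod_div j, Nat.succ_mul j (p / q)]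
  generalize p / q = m, (j + 1) * (p % q) / q = a, j * (p % q) / q = b at *
  omega

theorem mul_three_div_eq_ite {q j : ℕ} (hj : j * 3 < 2 * q) :
    j * 3 / q = if (q + 2) / 3 ≤ j then 1 else 0 := by
  split_ifs with h
  · exact Nat.div_eq_of_lt_le (by omega) (by omega)
  · exact Nat.div_eq_of_lt (by omega)

theorem mul_three_div_sub_eq_ite {q k : ℕ} (hkq : k * 3 < 2 * q) :
    k * 3 / q - (k - 1) * 3 / q = if k = (q + 2) / 3 then 1 else 0 := by
  rw [mul_three_div_eq_ite hkq, mul_three_div_eq_ite (j := k - 1) (by omega)]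
  split_ifs <;> omega

theorem legendreSym_three_index_eq (q : ℕ) :
    ((q : ℤ) + 2 + (legendreSym 3 q - 1) / 2) / 3 = ((q + 2) / 3 : ℕ) := by
  have h0 : legendreSym 3 0 = 0 := by decide
  have h1 : legendreSym 3 1 = 1 := by decide
  have h2 : legendreSym 3 2 = -1 := by decide
  rw [legendreSym.mod, Nat.cast_ofNat]
  have hq : (q : ℤ) % 3 = 0 ∨ (q : ℤ) % 3 = 1 ∨ (q : ℤ) % 3 = 2 := by omega
  rcases hq with h | h | h <;> simp only [h, h0, h1, h2] <;> omega

theorem stmt18_general (p q : ℕ)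
    (hpq : p % q = 3) :
    ∀ k, 1 ≤ k → k ≤ (q - 1) / 2 →
      ((k : ℤ) ≠ ((q : ℤ) + 2 + (legendreSym 3 q - 1) / 2) / 3 →
        (Finset.Ioc ((k - 1) * p / q) (k * p / q)).card = (p - 3) / q) ∧
      ((k : ℤ) = ((q : ℤ) + 2 + (legendreSym 3 q - 1) / 2) / 3 →
        (Finset.Ioc ((k - 1) * p / q) (k * p / q)).card = (p - 3) / q + 1) := by
  intro k hk hkq
  have hcard : #(Ioc ((k - 1) * p / q) (k * p / q)) =
      (p - 3) / q + if k = (q + 2) / 3 then 1 else 0 := by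
    rw [card_Ioc_mul_div p q k hk, hpq, mul_three_div_sub_eq_ite (by omega), ← hpq,
      ← Nat.div_eq_sub_mod_div]
  rw [legendreSym_three_index_eq, hcard]
  exact ⟨fun h => by rw [if_neg (mod_cast h), Nat.add_zero],
    fun h => by rw [if_pos (mod_cast h)]⟩

theorem stmt18 (p q : ℕ) [Fact q.Prime] (hp : p.Prime) (hq3 : 3 < q)
    (hpq : p % q = 3) :
    ∀ k, 1 ≤ k → k ≤ (q - 1) / 2 →
      ((k : ℤ) ≠ ((q : ℤ) + 2 + (legendreSym 3 q - 1) / 2) / 3 →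
        (Finset.Ioc ((k - 1) * p / q) (k * p / q)).card = (p - 3) / q) ∧
      ((k : ℤ) = ((q : ℤ) + 2 + (legendreSym 3 q - 1) / 2) / 3 →
        (Finset.Ioc ((k - 1) * p / q) (k * p / q)).card = (p - 3) / q + 1) :=
  stmt18_general p q hpq
end
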